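/- Let m be even, q a positive integer, and let H_m (order m, dimension n) and H_{qm} (order qm, dimension k, with n = q(k-1)+1) be Hankel tensors with the same generating vector. If H_{qm} is positive semi-definite, then λ_min(H_{qm}) ≥ c₁ · λ_min(H_m), where c₁ = min_{y ∈ ℝ^k, y≠0} ‖y^{∗q}‖_m^m / ‖y‖_{qm}^{qm} > 0 and λ_min denotes the minimal H-eigenvalue, characterized as λ_min(T) = min_{x≠0} T x^d / ‖x‖_d^d for an even order-d symmetric tensor T. -/

import Mathlib

noncomputable def conv (u v : ℕ → ℝ) : ℕ → ℝ :=
  fun k => ∑ j ∈ Finset.range (k + 1), u j * v (k - j)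

noncomputable def convPow (x : ℕ → ℝ) : ℕ → ℕ → ℝ
  | 0 => fun k => if k = 0 then 1 else 0
  | j + 1 => conv (convPow x j) x

noncomputable def pad {n : ℕ} (x : Fin n → ℝ) : ℕ → ℝ :=
  fun j => if hj : j < n then x ⟨j, hj⟩ else 0

/-!
Identify `x : Fin N → R` with the polynomial `P_x = ∑ xᵢ Xⁱ`. Then `H x^d = L_h (P_x ^ d)` for the
linear functional `L_h (∑ aₛ Xˢ) = ∑ hₛ aₛ`, and the `q`-fold self-convolution of `y` is the
coefficient vector of `P_y ^ q`, which has degree `≤ q (k - 1) < n`. Hence `H_{qm} y^{qm} = H_m x^m`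
for `x = y^{∗q} ∈ ℝⁿ`, and `x ≠ 0` whenever `y ≠ 0` because `ℝ[X]` is a domain; this gives
`c₁ > 0`. If `λ_min(H_m) ≥ 0` then
`H_{qm} y^{qm} ≥ λ_min(H_m) ‖x‖_m^m ≥ c₁ λ_min(H_m) ‖y‖_{qm}^{qm}`; otherwise
`c₁ λ_min(H_m) < 0 ≤ λ_min(H_{qm})` by positive semidefiniteness.
-/

open Polynomial Finset

section Hankel

variable {R : Type*} [CommSemiring R]

noncomputable def hankelForm (h : ℕ → R) (d : ℕ) {N : ℕ} (x : Fin N → R) : R :=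
  ∑ i : Fin d → Fin N, h (∑ j, (i j : ℕ)) * ∏ j, x (i j)

noncomputable def hankelFunctional (h : ℕ → R) : R[X] →ₗ[R] R :=
  lsum fun s => LinearMap.mulLeft R (h s)

noncomputable def vecPoly {N : ℕ} (x : Fin N → R) : R[X] :=
  ∑ i, C (x i) * X ^ (i : ℕ)

lemma hankelFunctional_C_mul_X_pow (h : ℕ → R) (a : R) (s : ℕ) :
    hankelFunctional h (C a * X ^ s) = h s * a := by
  rw [C_mul_X_pow_eq_monomial, hankelFunctional, lsum_apply, sum_monomial_index _ _ (by simp)]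
  rfl

theorem hankelForm_eq_hankelFunctional_pow (h : ℕ → R) (d : ℕ) {N : ℕ} (x : Fin N → R) :
    hankelForm h d x = hankelFunctional h (vecPoly x ^ d) := by
  have hexpand : vecPoly x ^ d = ∑ i : Fin d → Fin N, C (∏ j, x (i j)) * X ^ (∑ j, (i j : ℕ)) := by
    rw [vecPoly, ← Fin.prod_const, Fintype.prod_sum]
    refine Finset.sum_congr rfl fun i _ => ?_
    rw [prod_mul_distrib, map_prod, prod_pow_eq_pow_sum]
  simp only [hexpand, map_sum, hankelFunctional_C_mul_X_pow, hankelForm]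

lemma coeff_vecPoly {N : ℕ} (x : Fin N → R) (j : ℕ) :
    (vecPoly x).coeff j = if hj : j < N then x ⟨j, hj⟩ else 0 := by
  simp only [vecPoly, finsetSum_coeff, coeff_C_mul_X_pow]
  split_ifs with hj
  · rw [Finset.sum_eq_single ⟨j, hj⟩ (fun i _ hi => if_neg (by grind)) (by simp)]
    simp
  · exact Finset.sum_eq_zero fun i _ => if_neg (by omega)

lemma natDegree_vecPoly_le {N : ℕ} (x : Fin N → R) : (vecPoly x).natDegree ≤ N - 1 :=
  natDegree_sum_le_of_forall_le _ _ fun i _ =>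
    (natDegree_C_mul_X_pow_le _ _).trans (by omega)

lemma vecPoly_ne_zero {N : ℕ} {x : Fin N → R} (hx : x ≠ 0) : vecPoly x ≠ 0 := by
  obtain ⟨i, hi⟩ := Function.ne_iff.mp hx
  intro h0
  have := coeff_vecPoly x i
  rw [h0, coeff_zero, dif_pos i.isLt] at this
  exact hi this.symm

lemma vecPoly_coeff {N : ℕ} (p : R[X]) (hp : p.natDegree < N) :
    vecPoly (fun i : Fin N => p.coeff i) = p := by
  conv_rhs => rw [as_sum_range' p N hp]
  rw [vecPoly, ← Fin.sum_univ_eq_sum_range]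
  simp only [C_mul_X_pow_eq_monomial]

lemma natDegree_vecPoly_pow_lt {k n q : ℕ} (hn : q * (k - 1) < n) (y : Fin k → R) :
    (vecPoly y ^ q).natDegree < n :=
  natDegree_pow_le.trans_lt <| (Nat.mul_le_mul_left q (natDegree_vecPoly_le y)).trans_lt hn

theorem hankelForm_mul_eq_hankelForm_coeff_pow (h : ℕ → R) {k n q : ℕ} (hn : q * (k - 1) < n)
    (m : ℕ) (y : Fin k → R) :
    hankelForm h (q * m) y = hankelForm h m (fun i : Fin n => (vecPoly y ^ q).coeff i) := by
  rw [hankelForm_eq_hankelFunctional_pow, hankelForm_eq_hankelFunctional_pow,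
    vecPoly_coeff _ (natDegree_vecPoly_pow_lt hn y), pow_mul]

lemma coeff_vecPoly_pow_ne_zero [NoZeroDivisors R] {k n q : ℕ} (hn : q * (k - 1) < n)
    {y : Fin k → R} (hy : y ≠ 0) : (fun i : Fin n => (vecPoly y ^ q).coeff i) ≠ 0 := by
  intro h0
  apply pow_ne_zero q (vecPoly_ne_zero hy)
  rw [← vecPoly_coeff _ (natDegree_vecPoly_pow_lt hn y), h0]
  simp [vecPoly]

end Hankel

lemma conv_coeff (p r : ℝ[X]) : conv p.coeff r.coeff = (p * r).coeff := by
  funext t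
  rw [coeff_mul, Finset.Nat.sum_antidiagonal_eq_sum_range_succ_mk, conv]

lemma convPow_coeff (p : ℝ[X]) (d : ℕ) : convPow p.coeff d = (p ^ d).coeff := by
  induction d with
  | zero => funext t; simp [convPow, coeff_one]
  | succ d ih => rw [convPow, ih, conv_coeff, pow_succ]

lemma pad_eq_coeff_vecPoly {N : ℕ} (x : Fin N → ℝ) : pad x = (vecPoly x).coeff := by
  funext j
  rw [coeff_vecPoly, pad]

lemma sum_abs_pow_pos {N : ℕ} (p : ℕ) {x : Fin N → ℝ} (hx : x ≠ 0) : 0 < ∑ i, |x i| ^ p := by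
  obtain ⟨i, hi⟩ := Function.ne_iff.mp hx
  exact Finset.sum_pos' (fun j _ => by positivity)
    ⟨i, Finset.mem_univ i, pow_pos (abs_pos.mpr hi) p⟩

theorem stmt17_general (m q k n : ℕ)
    (hn : n = q * (k - 1) + 1) (h : ℕ → ℝ)
    (c₁ lamm lamqm : ℝ)
    (hc₁ : IsLeast {c : ℝ | ∃ y : Fin k → ℝ, y ≠ 0 ∧
      c = (∑ j ∈ Finset.range n, |convPow (pad y) q j| ^ m) / (∑ i, |y i| ^ (q * m))} c₁)
    (hlamm : IsLeast {t : ℝ | ∃ x : Fin n → ℝ, x ≠ 0 ∧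
      t = (∑ i : Fin m → Fin n, h (∑ j, (i j : ℕ)) * ∏ j, x (i j))
        / (∑ i, |x i| ^ m)} lamm)
    (hlamqm : IsLeast {t : ℝ | ∃ y : Fin k → ℝ, y ≠ 0 ∧
      t = (∑ i : Fin (q * m) → Fin k, h (∑ j, (i j : ℕ)) * ∏ j, y (i j))
        / (∑ i, |y i| ^ (q * m))} lamqm)
    (hpsd : ∀ y : Fin k → ℝ,
      0 ≤ ∑ i : Fin (q * m) → Fin k, h (∑ j, (i j : ℕ)) * ∏ j, y (i j)) :
    0 < c₁ ∧ c₁ * lamm ≤ lamqm := by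
  have hdeg : q * (k - 1) < n := by omega
  simp only [pad_eq_coeff_vecPoly, convPow_coeff,
    ← Fin.sum_univ_eq_sum_range fun j => |(_ : ℝ[X]).coeff j| ^ m] at hc₁
  set x : (Fin k → ℝ) → Fin n → ℝ := fun y i => (vecPoly y ^ q).coeff i
  have hx : ∀ {y}, y ≠ 0 → x y ≠ 0 := coeff_vecPoly_pow_ne_zero hdeg
  have hc₁_le : ∀ {y}, y ≠ 0 → c₁ * ∑ i, |y i| ^ (q * m) ≤ ∑ i, |x y i| ^ m := fun hy =>
    (le_div_iff₀ (sum_abs_pow_pos _ hy)).1 (hc₁.2 ⟨_, hy, rfl⟩)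
  have hc₁_pos : 0 < c₁ := by
    obtain ⟨y, hy, rfl⟩ := hc₁.1
    exact div_pos (sum_abs_pow_pos m (hx hy)) (sum_abs_pow_pos _ hy)
  refine ⟨hc₁_pos, ?_⟩
  obtain ⟨y, hy, rfl⟩ := hlamqm.1
  have hform : hankelForm h (q * m) y = hankelForm h m (x y) :=
    hankelForm_mul_eq_hankelForm_coeff_pow h hdeg m y
  rw [le_div_iff₀ (sum_abs_pow_pos _ hy)]
  rcases le_or_gt 0 lamm with hlamm_nonneg | hlamm_neg
  · have hlamm_le : lamm * ∑ i, |x y i| ^ m ≤ hankelForm h m (x y) :=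
      (le_div_iff₀ (sum_abs_pow_pos m (hx hy))).1 (hlamm.2 ⟨x y, hx hy, rfl⟩)
    calc c₁ * lamm * ∑ i, |y i| ^ (q * m) = lamm * (c₁ * ∑ i, |y i| ^ (q * m)) := by ring
      _ ≤ lamm * ∑ i, |x y i| ^ m := by gcongr; exact hc₁_le hy
      _ ≤ hankelForm h (q * m) y := hform ▸ hlamm_le
  · calc c₁ * lamm * ∑ i, |y i| ^ (q * m) ≤ 0 :=
          mul_nonpos_of_nonpos_of_nonneg (mul_nonpos_of_nonneg_of_nonpos hc₁_pos.le hlamm_neg.le)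
            (by positivity)
      _ ≤ _ := hpsd y

theorem stmt17 (m q k n : ℕ) (hme : Even m) (hm : 0 < m) (hq : 0 < q) (hk : 0 < k)
    (hn : n = q * (k - 1) + 1) (h : ℕ → ℝ)
    (c₁ lamm lamqm : ℝ)
    (hc₁ : IsLeast {c : ℝ | ∃ y : Fin k → ℝ, y ≠ 0 ∧
      c = (∑ j ∈ Finset.range n, |convPow (pad y) q j| ^ m) / (∑ i, |y i| ^ (q * m))} c₁)
    (hlamm : IsLeast {t : ℝ | ∃ x : Fin n → ℝ, x ≠ 0 ∧
      t = (∑ i : Fin m → Fin n, h (∑ j, (i j : ℕ)) * ∏ j, x (i j))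
        / (∑ i, |x i| ^ m)} lamm)
    (hlamqm : IsLeast {t : ℝ | ∃ y : Fin k → ℝ, y ≠ 0 ∧
      t = (∑ i : Fin (q * m) → Fin k, h (∑ j, (i j : ℕ)) * ∏ j, y (i j))
        / (∑ i, |y i| ^ (q * m))} lamqm)
    (hpsd : ∀ y : Fin k → ℝ,
      0 ≤ ∑ i : Fin (q * m) → Fin k, h (∑ j, (i j : ℕ)) * ∏ j, y (i j)) :
    0 < c₁ ∧ c₁ * lamm ≤ lamqm :=
  stmt17_general m q k n hn h c₁ lamm lamqm hc₁ hlamm hlamqm hpsd
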